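/- A topological space (X, 𝒯) is a GO-space (i.e., homeomorphic to a topological subspace of a linearly ordered topological space) if and only if there exist two nests 𝓛 and 𝓡 of open subsets of X such that 𝓛 ∪ 𝓡 T₁-separates X and 𝓛 ∪ 𝓡 is a subbasis for 𝒯. -/

import Mathlib

open Topology

/-- A nest on `X`: a family of subsets linearly ordered by inclusion. -/
def IsNest {X : Type*} (𝓛 : Set (Set X)) : Prop :=
  ∀ M ∈ 𝓛, ∀ N ∈ 𝓛, M ⊆ N ∨ N ⊆ M

/-- `𝓢` T₁-separates `X`. -/
def T1Sep {X : Type*} (𝓢 : Set (Set X)) : Prop :=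
  ∀ x y : X, x ≠ y → ∃ L ∈ 𝓢, ∃ L' ∈ 𝓢, (x ∈ L ∧ y ∉ L) ∧ (y ∈ L' ∧ x ∉ L')

/-- The order topology of a relation `R`: generated by the rays
`{x | R x a}` and `{x | R a x}`, `a ∈ X`. -/
def orderTopologyOf {X : Type*} (R : X → X → Prop) : TopologicalSpace X :=
  TopologicalSpace.generateFrom
    ({S | ∃ a, S = {x | R x a}} ∪ {S | ∃ a, S = {x | R a x}})

/-- `(X, t)` is a GO-space: it is homeomorphic to a topological subspace of a
linearly ordered topological space. -/
def IsGOSpace {X : Type u} (t : TopologicalSpace X) : Prop :=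
  ∃ (Y : Type u) (_ : LinearOrder Y) (s : Set Y),
    Nonempty (@Homeomorph X s t
      (TopologicalSpace.induced Subtype.val (orderTopologyOf (fun a b : Y => a < b))))

/-!
In a GO-space the preimages of the open rays `(←, a)` and `(a, →)` form the two nests.

Conversely, order `X` by `x < y` iff some member of `𝓛` contains `x` but not `y`.
T₁-separation makes this order linear, every member of `𝓛` a lower set and every member of `𝓡`
an upper set, and every open ray a union of members of `𝓛 ∪ 𝓡`. A topology on a linear order
that is finer than the order topology and generated by lower and upper sets is a GO-space: it is
induced by Lutzer's LOTS, obtained from `X` by adding a point just below `x` whenever `[x, →)` is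
open and a point just above `x` whenever `(←, x]` is open.
-/

open Set Function TopologicalSpace

theorem induced_orderTopologyOf {X Y : Type*} [LinearOrder Y] (f : X → Y) :
    induced f (orderTopologyOf (fun a b : Y => a < b)) =
      generateFrom (range (fun a => f ⁻¹' Iio a) ∪ range (fun a => f ⁻¹' Ioi a)) := by
  rw [orderTopologyOf, induced_generateFrom_eq, image_union]
  congr 2 <;> ext S <;> simp [Iio, Ioi, eq_comm]

theorem isGOSpace_iff_exists_injective {X : Type u} (t : TopologicalSpace X) :
    IsGOSpace t ↔ ∃ (Y : Type u) (_ : LinearOrder Y) (f : X → Y), Injective f ∧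
      t = induced f (orderTopologyOf (fun a b : Y => a < b)) := by
  let _ := t
  constructor
  · rintro ⟨Y, o, s, ⟨h⟩⟩
    let _ := orderTopologyOf (fun a b : Y => a < b)
    refine ⟨Y, o, Subtype.val ∘ h, Subtype.val_injective.comp h.injective, ?_⟩
    rw [← induced_compose]
    exact h.isInducing.eq_induced
  · rintro ⟨Y, o, f, hf, ht⟩
    let _ := orderTopologyOf (fun a b : Y => a < b)
    exact ⟨Y, o, range f, ⟨Topology.IsEmbedding.toHomeomorph ⟨⟨ht⟩, hf⟩⟩⟩

section RayNests

variable {X Y : Type*} [LinearOrder Y]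

theorem isNest_range_preimage_Iio (f : X → Y) : IsNest (range fun a => f ⁻¹' Iio a) := by
  rintro _ ⟨a, rfl⟩ _ ⟨b, rfl⟩
  rcases le_total a b with h | h
  · exact Or.inl (preimage_mono (Iio_subset_Iio h))
  · exact Or.inr (preimage_mono (Iio_subset_Iio h))

theorem isNest_range_preimage_Ioi (f : X → Y) : IsNest (range fun a => f ⁻¹' Ioi a) := by
  rintro _ ⟨a, rfl⟩ _ ⟨b, rfl⟩
  rcases le_total a b with h | h
  · exact Or.inr (preimage_mono (Ioi_subset_Ioi h))
  · exact Or.inl (preimage_mono (Ioi_subset_Ioi h))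

theorem t1Sep_range_preimage_Iio_union_Ioi {f : X → Y} (hf : Injective f) :
    T1Sep (range (fun a => f ⁻¹' Iio a) ∪ range (fun a => f ⁻¹' Ioi a)) := by
  intro x y hxy
  rcases (hf.ne hxy).lt_or_gt with h | h
  · exact ⟨_, Or.inl ⟨f y, rfl⟩, _, Or.inr ⟨f x, rfl⟩, ⟨h, lt_irrefl _⟩, h, lt_irrefl _⟩
  · exact ⟨_, Or.inr ⟨f y, rfl⟩, _, Or.inl ⟨f x, rfl⟩, ⟨h, lt_irrefl _⟩, h, lt_irrefl _⟩

end RayNests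

theorem IsGOSpace.exists_nests {X : Type u} {t : TopologicalSpace X} (h : IsGOSpace t) :
    ∃ 𝓛 𝓡 : Set (Set X), IsNest 𝓛 ∧ IsNest 𝓡 ∧ (∀ L ∈ 𝓛 ∪ 𝓡, IsOpen[t] L) ∧
      T1Sep (𝓛 ∪ 𝓡) ∧ t = generateFrom (𝓛 ∪ 𝓡) := by
  obtain ⟨Y, _, f, hf, rfl⟩ := (isGOSpace_iff_exists_injective t).1 h
  rw [induced_orderTopologyOf]
  exact ⟨_, _, isNest_range_preimage_Iio f, isNest_range_preimage_Ioi f,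
    fun _ hL => isOpen_generateFrom_of_mem hL, t1Sep_range_preimage_Iio_union_Ioi hf, rfl⟩

section Lutzer

variable {X : Type u} [LinearOrder X]

theorem IsLowerSet.eq_Iic_or_exists_lt {U : Set X} (hU : IsLowerSet U) {x : X} (hx : x ∈ U) :
    U = Iic x ∨ ∃ y ∈ U, x < y := by
  by_contra! h
  exact h.1 (Subset.antisymm h.2 (hU.Iic_subset hx))

theorem IsUpperSet.eq_Ici_or_exists_lt {U : Set X} (hU : IsUpperSet U) {x : X} (hx : x ∈ U) :
    U = Ici x ∨ ∃ y ∈ U, y < x := by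
  by_contra! h
  exact h.1 (Subset.antisymm h.2 (hU.Ici_subset hx))

/-- The point `(x, i)` stands for `x` when `i = 1`, for a point just below `x` when `i = 0` and
for a point just above `x` when `i = 2`. -/
abbrev LutzerExtension (t : TopologicalSpace X) : Type u :=
  {p : X ×ₗ Fin 3 // (ofLex p).2 = 1 ∨ ((ofLex p).2 = 0 ∧ IsOpen[t] (Ici (ofLex p).1)) ∨
    ((ofLex p).2 = 2 ∧ IsOpen[t] (Iic (ofLex p).1))}

namespace LutzerExtension

variable (t : TopologicalSpace X)

def embed (x : X) : LutzerExtension t := ⟨toLex (x, 1), Or.inl rfl⟩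

variable {t}

theorem embed_lt_iff {x : X} {b : LutzerExtension t} :
    embed t x < b ↔ x < (ofLex b.1).1 ∨ x = (ofLex b.1).1 ∧ 1 < (ofLex b.1).2 :=
  Prod.Lex.toLex_lt_toLex

theorem lt_embed_iff {x : X} {b : LutzerExtension t} :
    b < embed t x ↔ (ofLex b.1).1 < x ∨ (ofLex b.1).1 = x ∧ (ofLex b.1).2 < 1 :=
  Prod.Lex.toLex_lt_toLex

theorem embed_strictMono : StrictMono (embed t) := fun _ _ h => embed_lt_iff.2 (Or.inl h)

theorem isOpen_preimage_embed_Iio (hIio : ∀ a : X, IsOpen[t] (Iio a)) (b : LutzerExtension t) :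
    IsOpen[t] (embed t ⁻¹' Iio b) := by
  simp only [preimage, mem_Iio, embed_lt_iff]
  have hb := b.2
  generalize ofLex b.1 = q at hb ⊢
  obtain ⟨a, i⟩ := q
  rcases hb with rfl | ⟨rfl, -⟩ | ⟨rfl, hIic⟩
  · simpa [Iio_def] using hIio a
  · simpa [Iio_def] using hIio a
  · simpa [← le_iff_lt_or_eq, Iic_def] using hIic

theorem isOpen_preimage_embed_Ioi (hIoi : ∀ a : X, IsOpen[t] (Ioi a)) (b : LutzerExtension t) :
    IsOpen[t] (embed t ⁻¹' Ioi b) := by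
  simp only [preimage, mem_Ioi, lt_embed_iff]
  have hb := b.2
  generalize ofLex b.1 = q at hb ⊢
  obtain ⟨a, i⟩ := q
  rcases hb with rfl | ⟨rfl, hIci⟩ | ⟨rfl, -⟩
  · simpa [Ioi_def] using hIoi a
  · simpa [← le_iff_lt_or_eq, eq_comm, Ici_def] using hIci
  · simpa [Ioi_def] using hIoi a

theorem isOpen_induced_embed_of_isLowerSet {U : Set X} (hU : IsLowerSet U) (hUt : IsOpen[t] U) :
    IsOpen[induced (embed t) (orderTopologyOf fun a b => a < b)] U := by
  let _ := orderTopologyOf fun a b : LutzerExtension t => a < b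
  let _ := induced (embed t) ‹TopologicalSpace (LutzerExtension t)›
  refine isOpen_iff_forall_mem_open.2 fun x hx => ?_
  rcases hU.eq_Iic_or_exists_lt hx with rfl | ⟨y, hy, hxy⟩
  · refine ⟨_, subset_rfl, ?_, le_rfl⟩
    convert isOpen_induced (f := embed t) (isOpen_generateFrom_of_mem
      (Or.inl ⟨⟨toLex (x, 2), Or.inr (Or.inr ⟨rfl, hUt⟩)⟩, rfl⟩)) using 1
    ext z
    simp [embed_lt_iff, le_iff_lt_or_eq]
  · refine ⟨Iio y, hU.Iio_subset hy, ?_, hxy⟩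
    convert isOpen_induced (f := embed t) (isOpen_generateFrom_of_mem
      (Or.inl ⟨embed t y, rfl⟩)) using 1
    ext z
    exact embed_strictMono.lt_iff_lt.symm

theorem isOpen_induced_embed_of_isUpperSet {U : Set X} (hU : IsUpperSet U) (hUt : IsOpen[t] U) :
    IsOpen[induced (embed t) (orderTopologyOf fun a b => a < b)] U := by
  let _ := orderTopologyOf fun a b : LutzerExtension t => a < b
  let _ := induced (embed t) ‹TopologicalSpace (LutzerExtension t)›
  refine isOpen_iff_forall_mem_open.2 fun x hx => ?_
  rcases hU.eq_Ici_or_exists_lt hx with rfl | ⟨y, hy, hyx⟩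
  · refine ⟨_, subset_rfl, ?_, le_rfl⟩
    convert isOpen_induced (f := embed t) (isOpen_generateFrom_of_mem
      (Or.inr ⟨⟨toLex (x, 0), Or.inr (Or.inl ⟨rfl, hUt⟩)⟩, rfl⟩)) using 1
    ext z
    simp [lt_embed_iff, le_iff_lt_or_eq]
  · refine ⟨Ioi y, hU.Ioi_subset hy, ?_, hyx⟩
    convert isOpen_induced (f := embed t) (isOpen_generateFrom_of_mem
      (Or.inr ⟨embed t y, rfl⟩)) using 1
    ext z
    exact embed_strictMono.lt_iff_lt.symm

theorem induced_embed_eq_generateFrom {S : Set (Set X)}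
    (hS : ∀ U ∈ S, IsLowerSet U ∨ IsUpperSet U) (hIio : ∀ a : X, IsOpen[generateFrom S] (Iio a))
    (hIoi : ∀ a : X, IsOpen[generateFrom S] (Ioi a)) :
    induced (embed (generateFrom S)) (orderTopologyOf (fun a b => a < b)) = generateFrom S := by
  apply le_antisymm
  · refine le_generateFrom fun U hU => ?_
    rcases hS U hU with hlow | hup
    · exact isOpen_induced_embed_of_isLowerSet hlow (isOpen_generateFrom_of_mem hU)
    · exact isOpen_induced_embed_of_isUpperSet hup (isOpen_generateFrom_of_mem hU)
  · rw [induced_orderTopologyOf]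
    refine le_generateFrom ?_
    rintro _ (⟨b, rfl⟩ | ⟨b, rfl⟩)
    · exact isOpen_preimage_embed_Iio hIio b
    · exact isOpen_preimage_embed_Ioi hIoi b

end LutzerExtension

theorem isGOSpace_generateFrom_of_isLowerSet_or_isUpperSet {S : Set (Set X)}
    (hS : ∀ U ∈ S, IsLowerSet U ∨ IsUpperSet U) (hIio : ∀ a : X, IsOpen[generateFrom S] (Iio a))
    (hIoi : ∀ a : X, IsOpen[generateFrom S] (Ioi a)) : IsGOSpace (generateFrom S) :=
  (isGOSpace_iff_exists_injective _).2 ⟨_, inferInstance, _,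
    LutzerExtension.embed_strictMono.injective,
    (LutzerExtension.induced_embed_eq_generateFrom hS hIio hIoi).symm⟩

end Lutzer

section Nests

variable {X : Type*} {𝓛 𝓡 : Set (Set X)}

theorem IsNest.mem_of_mem_of_notMem {𝓒 : Set (Set X)} (h𝓒 : IsNest 𝓒) {M N : Set X}
    (hM : M ∈ 𝓒) (hN : N ∈ 𝓒) {a b : X} (haM : a ∈ M) (haN : a ∉ N) (hbN : b ∈ N) : b ∈ M :=
  (h𝓒 M hM N hN).elim (fun hMN => absurd (hMN haM) haN) (fun hNM => hNM hbN)

def NestLT (𝓛 : Set (Set X)) (x y : X) : Prop := ∃ L ∈ 𝓛, x ∈ L ∧ y ∉ L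

theorem nestLT_irrefl (x : X) : ¬ NestLT 𝓛 x x := fun ⟨_, _, hx, hx'⟩ => hx' hx

theorem IsNest.nestLT_trans (hL : IsNest 𝓛) {x y z : X} :
    NestLT 𝓛 x y → NestLT 𝓛 y z → NestLT 𝓛 x z := by
  rintro ⟨L, hL₁, hxL, hyL⟩ ⟨M, hM, hyM, hzM⟩
  exact ⟨M, hM, hL.mem_of_mem_of_notMem hM hL₁ hyM hyL hxL, hzM⟩

theorem IsNest.mem_of_nestLT (hL : IsNest 𝓛) {L : Set X} (hLm : L ∈ 𝓛) {x y : X}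
    (hxy : NestLT 𝓛 x y) (hy : y ∈ L) : x ∈ L :=
  let ⟨_, hM, hxM, hyM⟩ := hxy
  hL.mem_of_mem_of_notMem hLm hM hy hyM hxM

theorem isOpen_setOf_nestLT_left (a : X) :
    IsOpen[generateFrom (𝓛 ∪ 𝓡)] {x | NestLT 𝓛 x a} := by
  let _ := generateFrom (𝓛 ∪ 𝓡)
  refine isOpen_iff_forall_mem_open.2 fun x ⟨L, hLm, hxL, haL⟩ => ?_
  exact ⟨L, fun z hz => ⟨L, hLm, hz, haL⟩, isOpen_generateFrom_of_mem (Or.inl hLm), hxL⟩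

theorem nestLT_or_nestLT (hR : IsNest 𝓡) (hsep : T1Sep (𝓛 ∪ 𝓡)) {x y : X} (hxy : x ≠ y) :
    NestLT 𝓛 x y ∨ NestLT 𝓛 y x := by
  obtain ⟨S, hS, S', hS', ⟨hxS, hyS⟩, hyS', hxS'⟩ := hsep x y hxy
  rcases hS with hS | hS
  · exact Or.inl ⟨S, hS, hxS, hyS⟩
  rcases hS' with hS' | hS'
  · exact Or.inr ⟨S', hS', hyS', hxS'⟩
  exact absurd (hR.mem_of_mem_of_notMem hS' hS hyS' hyS hxS) hxS'

/-- Otherwise the set separating `y` from `x` could lie neither in `𝓛` nor in `𝓡`. -/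
theorem mem_of_nestLT_of_mem (hL : IsNest 𝓛) (hR : IsNest 𝓡) (hsep : T1Sep (𝓛 ∪ 𝓡))
    {R : Set X} (hRm : R ∈ 𝓡) {x y : X} (hxy : NestLT 𝓛 x y) (hx : x ∈ R) : y ∈ R := by
  obtain ⟨L, hLm, hxL, hyL⟩ := hxy
  by_contra hy
  obtain ⟨-, -, S, hS, -, hyS, hxS⟩ := hsep x y (ne_of_mem_of_not_mem hxL hyL)
  rcases hS with hS | hS
  · exact hxS (hL.mem_of_mem_of_notMem hS hLm hyS hyL hxL)
  · exact hxS (hR.mem_of_mem_of_notMem hS hRm hyS hy hx)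

theorem nestLT_iff_exists_mem_notMem (hL : IsNest 𝓛) (hR : IsNest 𝓡) (hsep : T1Sep (𝓛 ∪ 𝓡))
    {x y : X} : NestLT 𝓛 x y ↔ ∃ R ∈ 𝓡, y ∈ R ∧ x ∉ R := by
  constructor
  · rintro ⟨L, hLm, hxL, hyL⟩
    obtain ⟨-, -, S, hS, -, hyS, hxS⟩ := hsep x y (ne_of_mem_of_not_mem hxL hyL)
    rcases hS with hS | hS
    · exact absurd (hL.mem_of_mem_of_notMem hS hLm hyS hyL hxL) hxS
    · exact ⟨S, hS, hyS, hxS⟩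
  · rintro ⟨R, hRm, hyR, hxR⟩
    refine (nestLT_or_nestLT hR hsep (ne_of_mem_of_not_mem hyR hxR).symm).resolve_right
      fun hyx => hxR (mem_of_nestLT_of_mem hL hR hsep hRm hyx hyR)

theorem isOpen_setOf_nestLT_right (hL : IsNest 𝓛) (hR : IsNest 𝓡) (hsep : T1Sep (𝓛 ∪ 𝓡))
    (a : X) : IsOpen[generateFrom (𝓛 ∪ 𝓡)] {x | NestLT 𝓛 a x} := by
  let _ := generateFrom (𝓛 ∪ 𝓡)
  refine isOpen_iff_forall_mem_open.2 fun x hx => ?_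
  obtain ⟨R, hRm, hxR, haR⟩ := (nestLT_iff_exists_mem_notMem hL hR hsep).1 hx
  exact ⟨R, fun z hz => (nestLT_iff_exists_mem_notMem hL hR hsep).2 ⟨R, hRm, hz, haR⟩,
    isOpen_generateFrom_of_mem (Or.inr hRm), hxR⟩

noncomputable abbrev nestOrder (hL : IsNest 𝓛) (hR : IsNest 𝓡) (hsep : T1Sep (𝓛 ∪ 𝓡)) :
    LinearOrder X :=
  @linearOrderOfSTO X (NestLT 𝓛)
    { irrefl := nestLT_irrefl
      trans := fun _ _ _ => hL.nestLT_trans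
      trichotomous := fun _ _ h h' => by
        by_contra hxy
        exact (nestLT_or_nestLT hR hsep hxy).elim h h' }
    (Classical.decRel _)

end Nests

theorem isGOSpace_generateFrom_of_nests {X : Type u} {𝓛 𝓡 : Set (Set X)} (hL : IsNest 𝓛)
    (hR : IsNest 𝓡) (hsep : T1Sep (𝓛 ∪ 𝓡)) : IsGOSpace (generateFrom (𝓛 ∪ 𝓡)) := by
  let _ := nestOrder hL hR hsep
  refine isGOSpace_generateFrom_of_isLowerSet_or_isUpperSet ?_ isOpen_setOf_nestLT_left
    (isOpen_setOf_nestLT_right hL hR hsep)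
  rintro U (hU | hU)
  · refine Or.inl fun x y hyx hx => ?_
    rcases hyx.lt_or_eq with h | rfl
    · exact hL.mem_of_nestLT hU h hx
    · exact hx
  · refine Or.inr fun x y hxy hx => ?_
    rcases hxy.lt_or_eq with h | rfl
    · exact mem_of_nestLT_of_mem hL hR hsep hU h hx
    · exact hx

theorem isGOSpace_iff_nests {X : Type u} (t : TopologicalSpace X) :
    IsGOSpace t ↔
      ∃ 𝓛 𝓡 : Set (Set X), IsNest 𝓛 ∧ IsNest 𝓡 ∧
        (∀ L ∈ 𝓛 ∪ 𝓡, IsOpen[t] L) ∧ T1Sep (𝓛 ∪ 𝓡) ∧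
        t = TopologicalSpace.generateFrom (𝓛 ∪ 𝓡) := by
  refine ⟨IsGOSpace.exists_nests, ?_⟩
  rintro ⟨𝓛, 𝓡, hL, hR, -, hsep, rfl⟩
  exact isGOSpace_generateFrom_of_nests hL hR hsep
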